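/- The Thue-Morse subshift 𝕂 decomposes as the disjoint union 𝕂 = ⊔_{j=0}^{2ᵏ-1} σʲ(Hᵏ(𝕂)) for every k ≥ 1; in particular 𝕂 = H(𝕂) ⊔ σ(H(𝕂)). -/

import Mathlib

open Filter Topology MeasureTheory

/-- The left shift on the full 2-shift `Σ = {0,1}^ℕ`. -/
def shift (x : ℕ → Bool) : ℕ → Bool := fun n => x (n + 1)

/-- The Thue–Morse substitution `H : 0 → 01, 1 → 10`, acting on sequences. -/
def subH (x : ℕ → Bool) : ℕ → Bool :=
  fun n => if n % 2 = 0 then x (n / 2) else !x (n / 2)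

/-- The Thue–Morse sequence: `tm n` is the parity of the number of 1s in
the binary expansion of `n`. -/
def tm (n : ℕ) : Bool := (Nat.digits 2 n).count 1 % 2 == 1

/-- The fixed point of `subH` starting with 0. -/
def rho0 : ℕ → Bool := tm

/-- The fixed point of `subH` starting with 1. -/
def rho1 : ℕ → Bool := fun n => !tm n

/-- `rhoB b` is the fixed point of `subH` starting with digit `b`. -/
def rhoB : Bool → ℕ → Bool
  | false => rho0
  | true => rho1

/-- The digit-flipping involution. -/
def flipSeq (x : ℕ → Bool) : ℕ → Bool := fun n => !x n

/-- Prepend a digit to a sequence. -/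
def consTM (a : Bool) (x : ℕ → Bool) : ℕ → Bool
  | 0 => a
  | n + 1 => x n

/-- The Thue–Morse subshift: the closure of the shift orbit of `rho0`. -/
def TMK : Set (ℕ → Bool) := closure {y | ∃ n, y = shift^[n] rho0}

/-- The renormalization operator `𝓡V = V ∘ σ ∘ H + V ∘ H`. -/
def RenOp (V : (ℕ → Bool) → ℝ) : (ℕ → Bool) → ℝ :=
  fun x => V (shift (subH x)) + V (subH x)

/-- The Birkhoff sum `S_k V = ∑_{i<k} V ∘ σⁱ`. -/
def birkhoff (V : (ℕ → Bool) → ℝ) (k : ℕ) (x : ℕ → Bool) : ℝ :=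
  ∑ i ∈ Finset.range k, V (shift^[i] x)

/-- The potential `U_c`: value `c` on `[01]`, `-c` on `[10]`, `0` on `[00] ∪ [11]`. -/
def Upot (c : ℝ) (x : ℕ → Bool) : ℝ :=
  if x 0 = false ∧ x 1 = true then c
  else if x 0 = true ∧ x 1 = false then -c else 0

/-- The sliding block code `π(x)_k = 1` iff `x_k ≠ x_{k+1}`. -/
def piTM (x : ℕ → Bool) : ℕ → Bool := fun n => x n != x (n + 1)

/-- The Feigenbaum substitution `0 → 11, 1 → 10`, acting on sequences. -/
def subHfeig (x : ℕ → Bool) : ℕ → Bool :=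
  fun n => if n % 2 = 0 then true else !x (n / 2)

/-! Since `ρ₀` is a fixed point of `H` and `H ∘ σ = σ² ∘ H`, the even shifts of `ρ₀` lie in
`H(𝕂)` and the odd ones in `σ(H(𝕂))`; both sets are compact, so `𝕂 = H(𝕂) ∪ σ(H(𝕂))`. If
`H u = σ (H v)` then `u (m + 1) = ¬ v (m + 1) = u m` for all `m`, so `u` is constant, while no point
of `𝕂` starts with three equal letters: hence the union is disjoint. Writing `j = 2q + r` with
`r < 2` gives `σ^j(H^{k+1}(𝕂)) = σ^r(H(σ^q(H^k(𝕂))))`, and since `H` and `σ ∘ H` are injective,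
both the covering and the disjointness pass from level `k` to level `k + 1`. -/

lemma subH_apply_two_mul (x : ℕ → Bool) (m : ℕ) : subH x (2 * m) = x m := by
  simp [subH]

lemma subH_apply_two_mul_add_one (x : ℕ → Bool) (m : ℕ) : subH x (2 * m + 1) = !x m := by
  simp [subH, Nat.add_mod, Nat.add_div]

lemma subH_apply_succ_of_even (x : ℕ → Bool) {n : ℕ} (hn : Even n) :
    subH x (n + 1) = !subH x n := by
  obtain ⟨m, rfl⟩ := hn
  rw [← two_mul, subH_apply_two_mul, subH_apply_two_mul_add_one]

lemma shift_iterate_apply (n i : ℕ) (x : ℕ → Bool) : shift^[n] x i = x (i + n) := by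
  induction n generalizing x with
  | zero => rfl
  | succ n ih => rw [Function.iterate_succ_apply, ih]; rfl

lemma semiconj_subH_shift : Function.Semiconj subH shift (shift^[2]) := by
  intro x
  funext n
  simp only [shift_iterate_apply, subH, shift]
  rw [show (n + 2) / 2 = n / 2 + 1 by omega, show (n + 2) % 2 = n % 2 by omega]

lemma semiconj_subH_shift_iterate (q : ℕ) :
    Function.Semiconj subH (shift^[q]) (shift^[2 * q]) := by
  rw [Function.iterate_mul]
  exact semiconj_subH_shift.iterate_right q

lemma shift_subH_apply_two_mul (x : ℕ → Bool) (m : ℕ) : shift (subH x) (2 * m) = !x m :=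
  subH_apply_two_mul_add_one x m

lemma shift_subH_apply_two_mul_add_one (x : ℕ → Bool) (m : ℕ) :
    shift (subH x) (2 * m + 1) = x (m + 1) :=
  subH_apply_two_mul x (m + 1)

lemma subH_injective : Function.Injective subH := fun u v h =>
  funext fun m => by simpa only [subH_apply_two_mul] using congrFun h (2 * m)

lemma shift_comp_subH_injective : Function.Injective (shift ∘ subH) := by
  intro u v h
  funext m
  cases m with
  | zero =>
    have h := congrFun h (2 * 0)
    rw [Function.comp_apply, Function.comp_apply, shift_subH_apply_two_mul,
      shift_subH_apply_two_mul] at h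
    exact Bool.not_inj h
  | succ m =>
    have h := congrFun h (2 * m + 1)
    rwa [Function.comp_apply, Function.comp_apply, shift_subH_apply_two_mul_add_one,
      shift_subH_apply_two_mul_add_one] at h

lemma apply_succ_eq_of_subH_eq_shift_subH {u v : ℕ → Bool} (h : subH u = shift (subH v))
    (m : ℕ) : u (m + 1) = u m := by
  have hodd := congrFun h (2 * m + 1)
  have heven := congrFun h (2 * (m + 1))
  rw [subH_apply_two_mul_add_one, shift_subH_apply_two_mul_add_one] at hodd
  rw [subH_apply_two_mul, shift_subH_apply_two_mul, ← hodd, Bool.not_not] at heven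
  exact heven

lemma shift_iterate_image_subH_image (q r : ℕ) (S : Set (ℕ → Bool)) :
    shift^[2 * q + r] '' (subH '' S) = shift^[r] '' (subH '' (shift^[q] '' S)) := by
  rw [(semiconj_subH_shift_iterate q).set_image S, ← Set.image_comp (shift^[r]),
    ← Function.iterate_add, add_comm]

lemma subH_iterate_succ_image (k : ℕ) (S : Set (ℕ → Bool)) :
    subH^[k + 1] '' S = subH '' (subH^[k] '' S) := by
  rw [Function.iterate_succ', Set.image_comp]

lemma biUnion_range_two_mul {α : Type*} (f : ℕ → Set α) (n : ℕ) :
    ⋃ j ∈ Finset.range (2 * n), f j =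
      ⋃ r ∈ Finset.range 2, ⋃ q ∈ Finset.range n, f (2 * q + r) := by
  ext x
  simp only [Set.mem_iUnion, Finset.mem_range, exists_prop]
  constructor
  · rintro ⟨j, hj, hx⟩
    exact ⟨j % 2, j.mod_lt two_pos, j / 2, by omega, by rwa [Nat.div_add_mod]⟩
  · rintro ⟨r, hr, q, hq, hx⟩
    exact ⟨_, by omega, hx⟩

lemma tm_two_mul (n : ℕ) : tm (2 * n) = tm n := by
  rcases Nat.eq_zero_or_pos n with rfl | hn
  · rfl
  · have h := Nat.digits_add 2 one_lt_two 0 n two_pos (Or.inr hn.ne')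
    rw [zero_add] at h
    simp [tm, h]

lemma tm_two_mul_add_one (n : ℕ) : tm (2 * n + 1) = !tm n := by
  have h := Nat.digits_add 2 one_lt_two 1 n one_lt_two (Or.inl one_ne_zero)
  rw [add_comm] at h
  simp only [tm, h, List.count_cons_self]
  rcases Nat.mod_two_eq_zero_or_one ((Nat.digits 2 n).count 1) with h | h <;>
    simp [h, Nat.add_mod]

lemma subH_rho0 : subH rho0 = rho0 := by
  funext n
  obtain ⟨m, rfl | rfl⟩ := Nat.even_or_odd' n
  · exact (subH_apply_two_mul rho0 m).trans (tm_two_mul m).symm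
  · exact (subH_apply_two_mul_add_one rho0 m).trans (tm_two_mul_add_one m).symm

lemma continuous_shift : Continuous shift :=
  continuous_pi fun n => continuous_apply (n + 1)

lemma continuous_subH : Continuous subH := by
  refine continuous_pi fun n => ?_
  unfold subH
  split_ifs
  · exact continuous_apply _
  · exact (continuous_of_discreteTopology (f := not)).comp (continuous_apply _)

lemma isCompact_TMK : IsCompact TMK := isClosed_closure.isCompact

lemma shift_iterate_rho0_mem_TMK (n : ℕ) : shift^[n] rho0 ∈ TMK := subset_closure ⟨n, rfl⟩

lemma TMK_subset_of_isClosed {s : Set (ℕ → Bool)} (hs : IsClosed s)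
    (h : ∀ n, shift^[n] rho0 ∈ s) : TMK ⊆ s :=
  closure_minimal (by rintro _ ⟨n, rfl⟩; exact h n) hs

lemma mapsTo_TMK {f : (ℕ → Bool) → ℕ → Bool} (hf : Continuous f)
    (h : ∀ n, ∃ m, f (shift^[n] rho0) = shift^[m] rho0) : Set.MapsTo f TMK TMK :=
  Set.MapsTo.closure (by rintro _ ⟨n, rfl⟩; obtain ⟨m, hm⟩ := h n; exact ⟨m, hm⟩) hf

lemma mapsTo_shift_TMK : Set.MapsTo shift TMK TMK :=
  mapsTo_TMK continuous_shift fun n => ⟨n + 1, (Function.iterate_succ_apply' ..).symm⟩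

lemma mapsTo_subH_TMK : Set.MapsTo subH TMK TMK :=
  mapsTo_TMK continuous_subH fun n =>
    ⟨2 * n, by rw [semiconj_subH_shift_iterate n rho0, subH_rho0]⟩

lemma shift_iterate_image_subH_iterate_image_TMK_subset (q k : ℕ) :
    shift^[q] '' (subH^[k] '' TMK) ⊆ TMK :=
  (Set.image_mono (mapsTo_subH_TMK.iterate k).image_subset).trans
    (mapsTo_shift_TMK.iterate q).image_subset

/-- `H x` consists of the blocks `01` and `10`, so no shift of it starts with `000` or `111`. -/
lemma not_constant_on_first_three_of_mem_TMK {x : ℕ → Bool} (hx : x ∈ TMK) :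
    ¬(x 0 = x 1 ∧ x 1 = x 2) := by
  have hclosed : IsClosed {x : ℕ → Bool | ¬(x 0 = x 1 ∧ x 1 = x 2)} :=
    (isClosed_discrete {p : Bool × Bool × Bool | ¬(p.1 = p.2.1 ∧ p.2.1 = p.2.2)}).preimage
      (f := fun x : ℕ → Bool => (x 0, x 1, x 2)) (by fun_prop)
  refine TMK_subset_of_isClosed hclosed (fun n => ?_) hx
  change ¬(_ ∧ _)
  rw [shift_iterate_apply, shift_iterate_apply, shift_iterate_apply, ← subH_rho0]
  rintro ⟨h01, h12⟩
  rcases Nat.even_or_odd n with hn | hn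
  · rw [zero_add, add_comm 1 n, subH_apply_succ_of_even rho0 hn] at h01
    exact Bool.not_ne_self _ h01.symm
  · rw [add_comm 1 n, show 2 + n = n + 1 + 1 by ring,
      subH_apply_succ_of_even rho0 hn.add_one] at h12
    exact Bool.not_ne_self _ h12.symm

lemma TMK_eq_subH_image_union : TMK = subH '' TMK ∪ shift '' (subH '' TMK) := by
  refine subset_antisymm ?_ (Set.union_subset mapsTo_subH_TMK.image_subset
    (Set.image_subset_iff.mpr fun _ hx => mapsTo_shift_TMK (mapsTo_subH_TMK.image_subset hx)))
  have hHK := isCompact_TMK.image continuous_subH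
  refine TMK_subset_of_isClosed (hHK.union (hHK.image continuous_shift)).isClosed fun n => ?_
  obtain ⟨q, rfl | rfl⟩ := Nat.even_or_odd' n
  · exact Or.inl ⟨_, shift_iterate_rho0_mem_TMK q, by
      rw [semiconj_subH_shift_iterate q rho0, subH_rho0]⟩
  · refine Or.inr ⟨_, ⟨_, shift_iterate_rho0_mem_TMK q, rfl⟩, ?_⟩
    rw [semiconj_subH_shift_iterate q rho0, subH_rho0, Function.iterate_succ_apply']

lemma disjoint_subH_image_shift_subH_image : Disjoint (subH '' TMK) (shift '' (subH '' TMK)) := by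
  rw [Set.disjoint_left]
  rintro _ ⟨u, hu, rfl⟩ ⟨_, ⟨v, -, rfl⟩, h⟩
  have hconst := apply_succ_eq_of_subH_eq_shift_subH h.symm
  exact not_constant_on_first_three_of_mem_TMK hu ⟨(hconst 0).symm, (hconst 1).symm⟩

lemma disjoint_shift_iterate_image_subH_image {r r' : ℕ} (hr : r < 2) (hr' : r' < 2)
    {A B : Set (ℕ → Bool)} (hA : A ⊆ TMK) (hB : B ⊆ TMK) (hAB : r = r' → Disjoint A B) :
    Disjoint (shift^[r] '' (subH '' A)) (shift^[r'] '' (subH '' B)) := by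
  have hmixed {A B : Set (ℕ → Bool)} (hA : A ⊆ TMK) (hB : B ⊆ TMK) :
      Disjoint (subH '' A) (shift '' (subH '' B)) :=
    disjoint_subH_image_shift_subH_image.mono (Set.image_mono hA)
      (Set.image_mono (Set.image_mono hB))
  interval_cases r <;> interval_cases r'
  · simpa [Set.disjoint_image_iff subH_injective] using hAB rfl
  · simpa using hmixed hA hB
  · simpa using (hmixed hB hA).symm
  · rw [← Set.image_comp, ← Set.image_comp]
    exact (Set.disjoint_image_iff shift_comp_subH_injective).mpr (hAB rfl)

lemma TMK_eq_biUnion_shift_iterate_image_subH_iterate_image (k : ℕ) :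
    TMK = ⋃ j ∈ Finset.range (2 ^ k), shift^[j] '' (subH^[k] '' TMK) := by
  induction k with
  | zero => simp
  | succ k ih =>
    have hclass (r : ℕ) :
        ⋃ q ∈ Finset.range (2 ^ k), shift^[2 * q + r] '' (subH^[k + 1] '' TMK) =
          shift^[r] '' (subH '' TMK) := by
      simp only [subH_iterate_succ_image, shift_iterate_image_subH_image]
      rw [← Set.image_iUnion₂, ← Set.image_iUnion₂, ← ih]
    rw [pow_succ', biUnion_range_two_mul, show Finset.range 2 = {0, 1} from rfl,
      Finset.set_biUnion_insert, Finset.set_biUnion_singleton, hclass, hclass]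
    simpa using TMK_eq_subH_image_union

lemma disjoint_shift_iterate_image_subH_iterate_image (k : ℕ) :
    ∀ i j, i < j → j < 2 ^ k →
      Disjoint (shift^[i] '' (subH^[k] '' TMK)) (shift^[j] '' (subH^[k] '' TMK)) := by
  induction k with
  | zero =>
    intro i j hij hj
    rw [pow_zero] at hj
    omega
  | succ k ih =>
    intro i j hij hj
    rw [pow_succ] at hj
    rw [← Nat.div_add_mod i 2, ← Nat.div_add_mod j 2, subH_iterate_succ_image,
      shift_iterate_image_subH_image, shift_iterate_image_subH_image]
    exact disjoint_shift_iterate_image_subH_image (i.mod_lt two_pos) (j.mod_lt two_pos)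
      (shift_iterate_image_subH_iterate_image_TMK_subset _ _)
      (shift_iterate_image_subH_iterate_image_TMK_subset _ _)
      fun hr => ih _ _ (by omega) (by omega)

theorem stmt5_general (k : ℕ) :
    (TMK = ⋃ j ∈ Finset.range (2 ^ k), shift^[j] '' (subH^[k] '' TMK)) ∧
    (∀ i j, i < j → j < 2 ^ k →
      Disjoint (shift^[i] '' (subH^[k] '' TMK)) (shift^[j] '' (subH^[k] '' TMK))) ∧
    TMK = subH '' TMK ∪ shift '' (subH '' TMK) ∧
    Disjoint (subH '' TMK) (shift '' (subH '' TMK)) :=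
  ⟨TMK_eq_biUnion_shift_iterate_image_subH_iterate_image k,
    disjoint_shift_iterate_image_subH_iterate_image k,
    TMK_eq_subH_image_union, disjoint_subH_image_shift_subH_image⟩

/-- `𝕂 = ⊔_{j<2ᵏ} σʲ(Hᵏ(𝕂))` (disjointly) for every `k ≥ 1`;
in particular `𝕂 = H(𝕂) ⊔ σ(H(𝕂))`. -/
theorem stmt5 (k : ℕ) (hk : 1 ≤ k) :
    (TMK = ⋃ j ∈ Finset.range (2 ^ k), shift^[j] '' (subH^[k] '' TMK)) ∧
    (∀ i j, i < j → j < 2 ^ k →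
      Disjoint (shift^[i] '' (subH^[k] '' TMK)) (shift^[j] '' (subH^[k] '' TMK))) ∧
    TMK = subH '' TMK ∪ shift '' (subH '' TMK) ∧
    Disjoint (subH '' TMK) (shift '' (subH '' TMK)) :=
  stmt5_general k
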